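/- Let f : ℝⁿ → ℝ be convex and L-smooth (L > 0), let x* be a minimizer of f with f* = f(x*), fix α ∈ (0, 1/L] and r ≥ 3. Define a₀ = 0, a_k = (k+r−2)/(r−1) for k ≥ 1, the Nesterov iterates x₋₁ = x₀, y_k = x_k + ((k−1)/(k+r−1))·(x_k − x_{k-1}), x_{k+1} = y_k − α∇f(y_k), and p_k = (a_k − 1)(x_k − x_{k-1}) for k ≥ 1, p₀ = 0. Then for every k ≥ 0, ‖p_{k+1} + x_{k+1} − x*‖² ≤ ‖p_k + x_k − x*‖² − 2α a_{k+1}² (f(x_{k+1}) − f*) + 2α a_k² (f(x_k) − f*). -/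

import Mathlib

/-!
With `A = a_{k+1}`, the choice of momentum gives `p_k + x_k = A y_k - (A - 1) x_k`, so the
vector `v_k = p_k + x_k - x*` moves by `v_{k+1} = v_k - α A ∇f(y_k)`. Expanding the square, the
cross term `⟪∇f(y_k), v_k⟫` is bounded below by the gradient-step inequality
`f(y - α∇f(y)) ≤ f(z) + ⟪∇f(y), y - z⟫ - α/2 ‖∇f(y)‖²` (convexity at `y` plus the descent lemma)
at `z = x*` with weight `A` and at `z = x_k` with weight `A (A - 1)`; this exactly absorbs the
`α² A² ‖∇f(y_k)‖²` term, and `A (A - 1) ≤ a_k²` (this is where `r ≥ 3` enters) finishes the proof.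
-/

open RealInnerProductSpace

section Descent

variable {E : Type*} [NormedAddCommGroup E] [InnerProductSpace ℝ E] [CompleteSpace E]
  {f : E → ℝ} {L : ℝ}

theorem le_add_inner_gradient_add_of_lipschitz_gradient (hf : Differentiable ℝ f)
    (hlip : ∀ a b, ‖gradient f a - gradient f b‖ ≤ L * ‖a - b‖) (a b : E) :
    f b ≤ f a + ⟪gradient f a, b - a⟫ + L / 2 * ‖b - a‖ ^ 2 := by
  set d := b - a
  let φ : ℝ → ℝ := fun t => f (a + t • d) - t * ⟪gradient f a, d⟫ - L / 2 * t ^ 2 * ‖d‖ ^ 2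
  have hφ : ∀ t, HasDerivAt φ
      (⟪gradient f (a + t • d), d⟫ - ⟪gradient f a, d⟫ - L * t * ‖d‖ ^ 2) t := by
    intro t
    have hline : HasDerivAt (fun s : ℝ => a + s • d) d t := by
      simpa using ((hasDerivAt_id t).smul_const d).const_add a
    have hcomp := (hf (a + t • d)).hasFDerivAt.comp_hasDerivAt t hline
    rw [← inner_gradient_left] at hcomp
    refine ((hcomp.sub ((hasDerivAt_id t).mul_const ⟪gradient f a, d⟫)).sub
      (((hasDerivAt_pow 2 t).const_mul (L / 2)).mul_const (‖d‖ ^ 2))).congr_deriv ?_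
    push_cast; ring
  have hanti : AntitoneOn φ (Set.Ici 0) := by
    refine antitoneOn_of_hasDerivWithinAt_nonpos (convex_Ici 0)
      (fun t _ => (hφ t).continuousAt.continuousWithinAt)
      (fun t _ => (hφ t).hasDerivWithinAt) ?_
    intro t ht
    rw [interior_Ici] at ht
    have hnorm : ‖(a + t • d) - a‖ = t * ‖d‖ := by
      rw [add_sub_cancel_left, norm_smul, Real.norm_of_nonneg (le_of_lt ht)]
    calc ⟪gradient f (a + t • d), d⟫ - ⟪gradient f a, d⟫ - L * t * ‖d‖ ^ 2
        = ⟪gradient f (a + t • d) - gradient f a, d⟫ - L * t * ‖d‖ ^ 2 := by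
          rw [inner_sub_left]
      _ ≤ L * (t * ‖d‖) * ‖d‖ - L * t * ‖d‖ ^ 2 := by
          gcongr
          refine (real_inner_le_norm _ _).trans ?_
          gcongr
          exact hnorm ▸ hlip _ _
      _ = 0 := by ring
  have h := hanti Set.self_mem_Ici (zero_le_one' ℝ) zero_le_one
  simp only [φ, zero_smul, add_zero, one_smul, zero_mul, sub_zero, one_mul, one_pow, ne_eq,
    OfNat.ofNat_ne_zero, not_false_eq_true, zero_pow, mul_zero, d, add_sub_cancel] at h
  linarith

theorem le_sub_inner_gradient_sub_of_gradient_step (hf : Differentiable ℝ f)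
    (hlip : ∀ a b, ‖gradient f a - gradient f b‖ ≤ L * ‖a - b‖) {α : ℝ} (hα : 0 ≤ α)
    (hαL : α * L ≤ 1) {y z : E} (hconv : f y + ⟪gradient f y, z - y⟫ ≤ f z) :
    f (y - α • gradient f y) ≤ f z + ⟪gradient f y, y - z⟫ - α / 2 * ‖gradient f y‖ ^ 2 := by
  have hdesc := le_add_inner_gradient_add_of_lipschitz_gradient hf hlip y (y - α • gradient f y)
  rw [sub_sub_cancel_left, inner_neg_right, real_inner_smul_right, real_inner_self_eq_norm_sq,
    norm_neg, norm_smul, Real.norm_of_nonneg hα, mul_pow] at hdesc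
  have hinner : ⟪gradient f y, z - y⟫ = -⟪gradient f y, y - z⟫ := by
    rw [← inner_neg_right, neg_sub]
  nlinarith [mul_le_mul_of_nonneg_right hαL (mul_nonneg hα (sq_nonneg ‖gradient f y‖))]

end Descent

section Coefficients

variable {r : ℝ} {a : ℕ → ℝ}

theorem nesterov_coeff_succ (ha : ∀ k : ℕ, 1 ≤ k → a k = ((k : ℝ) + r - 2) / (r - 1))
    (k : ℕ) : a (k + 1) = ((k : ℝ) + r - 1) / (r - 1) := by
  rw [ha (k + 1) k.succ_pos]
  push_cast
  ring

theorem one_le_nesterov_coeff_succ (hr : 1 < r)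
    (ha : ∀ k : ℕ, 1 ≤ k → a k = ((k : ℝ) + r - 2) / (r - 1)) (k : ℕ) : 1 ≤ a (k + 1) := by
  rw [nesterov_coeff_succ ha, le_div_iff₀ (by linarith)]
  linarith [k.cast_nonneg (α := ℝ)]

theorem nesterov_coeff_succ_mul_sub_one_le_sq (hr : 3 ≤ r) (ha0 : a 0 = 0)
    (ha : ∀ k : ℕ, 1 ≤ k → a k = ((k : ℝ) + r - 2) / (r - 1)) (k : ℕ) :
    a (k + 1) * (a (k + 1) - 1) ≤ a k ^ 2 := by
  have hr1 : 0 < r - 1 := by linarith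
  rw [nesterov_coeff_succ ha]
  rcases Nat.eq_zero_or_pos k with rfl | hk
  · simp [ha0, div_self hr1.ne']
  rw [ha k hk, div_sub_one hr1.ne', div_mul_div_comm, div_pow,
    div_le_div_iff₀ (by positivity) (by positivity)]
  -- `(k + r - 2)² - (k + r - 1) k = k (r - 3) + (r - 2)²`
  have hgap : 0 ≤ ((k : ℝ) * (r - 3) + (r - 2) ^ 2) * (r - 1) ^ 2 :=
    mul_nonneg (add_nonneg (mul_nonneg k.cast_nonneg (by linarith)) (sq_nonneg _)) (sq_nonneg _)
  linarith [hgap]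

theorem nesterov_coeff_sub_one_eq (hr : 1 < r)
    (ha : ∀ k : ℕ, 1 ≤ k → a k = ((k : ℝ) + r - 2) / (r - 1)) {k : ℕ} (hk : 1 ≤ k) :
    a k - 1 = a (k + 1) * (((k : ℝ) - 1) / ((k : ℝ) + r - 1)) := by
  have hr1 : r - 1 ≠ 0 := by linarith
  have hkr : (k : ℝ) + r - 1 ≠ 0 := by linarith [k.cast_nonneg (α := ℝ)]
  rw [nesterov_coeff_succ ha, ha k hk]
  field_simp
  ring

end Coefficients

theorem nesterov_momentum_identity {E : Type*} [AddCommGroup E] [Module ℝ E] {r : ℝ} {a : ℕ → ℝ}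
    (hr : 1 < r) (ha : ∀ k : ℕ, 1 ≤ k → a k = ((k : ℝ) + r - 2) / (r - 1))
    {x y p : ℕ → E}
    (hy : ∀ k : ℕ, y k = x k + (((k : ℝ) - 1) / ((k : ℝ) + r - 1)) • (x k - x (k - 1)))
    (hp0 : p 0 = 0) (hp : ∀ k : ℕ, 1 ≤ k → p k = (a k - 1) • (x k - x (k - 1))) (k : ℕ) :
    p k + x k = a (k + 1) • y k - (a (k + 1) - 1) • x k := by
  rcases Nat.eq_zero_or_pos k with rfl | hk
  · have hy0 : y 0 = x 0 := by simpa using hy 0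
    rw [hp0, hy0]
    module
  · rw [hp k hk, hy k, nesterov_coeff_sub_one_eq hr ha hk]
    module

theorem norm_add_smul_sub_smul_sq_le {E : Type*} [NormedAddCommGroup E] [InnerProductSpace ℝ E]
    {w u g : E} {A B α F₀ F₁ : ℝ} (hα : 0 ≤ α) (hA : 1 ≤ A) (hAB : A * (A - 1) ≤ B ^ 2)
    (hF₀ : 0 ≤ F₀) (h₁ : F₁ ≤ ⟪g, w⟫ - α / 2 * ‖g‖ ^ 2)
    (h₂ : F₁ - F₀ ≤ ⟪g, u⟫ - α / 2 * ‖g‖ ^ 2) :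
    ‖w + (A - 1) • u - (α * A) • g‖ ^ 2 ≤
      ‖w + (A - 1) • u‖ ^ 2 - 2 * α * A ^ 2 * F₁ + 2 * α * B ^ 2 * F₀ := by
  have hexpand : ‖w + (A - 1) • u - (α * A) • g‖ ^ 2 = ‖w + (A - 1) • u‖ ^ 2
      - 2 * (α * A) * (⟪g, w⟫ + (A - 1) * ⟪g, u⟫) + (α * A) ^ 2 * ‖g‖ ^ 2 := by
    rw [norm_sub_sq_real, real_inner_smul_right, norm_smul, Real.norm_eq_abs, mul_pow, sq_abs,
      inner_add_left, real_inner_smul_left, real_inner_comm w, real_inner_comm u]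
    ring
  have hF₁ : A * F₁ + A * (A - 1) * (F₁ - F₀) + α / 2 * A ^ 2 * ‖g‖ ^ 2
      ≤ A * ⟪g, w⟫ + A * (A - 1) * ⟪g, u⟫ := by
    nlinarith [mul_le_mul_of_nonneg_left h₁ (by linarith : 0 ≤ A),
      mul_le_mul_of_nonneg_left h₂ (by nlinarith : 0 ≤ A * (A - 1))]
  rw [hexpand]
  nlinarith [mul_le_mul_of_nonneg_right hAB hF₀, mul_le_mul_of_nonneg_left hF₁ hα]

theorem nesterov_one_step_estimate_general {n : ℕ} (f : EuclideanSpace ℝ (Fin n) → ℝ)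
    (L : ℝ)
    (hsmooth : ContDiff ℝ 1 f)
    (hlip : ∀ a b, ‖gradient f a - gradient f b‖ ≤ L * ‖a - b‖)
    (hconv : ∀ a b, f a + ⟪gradient f a, b - a⟫ ≤ f b)
    (xs : EuclideanSpace ℝ (Fin n)) (hmin : ∀ z, f xs ≤ f z)
    (α r : ℝ) (hα : 0 < α) (hαL : α ≤ 1 / L) (hr : 3 ≤ r)
    (a : ℕ → ℝ) (ha0 : a 0 = 0)
    (ha : ∀ k : ℕ, 1 ≤ k → a k = ((k : ℝ) + r - 2) / (r - 1))
    (x y : ℕ → EuclideanSpace ℝ (Fin n))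
    (hy : ∀ k : ℕ, y k = x k + (((k : ℝ) - 1) / ((k : ℝ) + r - 1)) • (x k - x (k - 1)))
    (hx : ∀ k : ℕ, x (k + 1) = y k - α • gradient f (y k))
    (p : ℕ → EuclideanSpace ℝ (Fin n)) (hp0 : p 0 = 0)
    (hp : ∀ k : ℕ, 1 ≤ k → p k = (a k - 1) • (x k - x (k - 1))) :
    ∀ k : ℕ, ‖p (k + 1) + x (k + 1) - xs‖ ^ 2 ≤
      ‖p k + x k - xs‖ ^ 2 - 2 * α * (a (k + 1)) ^ 2 * (f (x (k + 1)) - f xs)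
        + 2 * α * (a k) ^ 2 * (f (x k) - f xs) := by
  intro k
  have hαL' : α * L ≤ 1 := by
    rcases le_or_gt L 0 with hL | hL
    · nlinarith
    · exact (le_div_iff₀ hL).1 hαL
  have hstep (z) : f (x (k + 1)) ≤
      f z + ⟪gradient f (y k), y k - z⟫ - α / 2 * ‖gradient f (y k)‖ ^ 2 :=
    hx k ▸ le_sub_inner_gradient_sub_of_gradient_step (hsmooth.differentiable one_ne_zero) hlip
      hα.le hαL' (hconv _ _)
  have hr1 : 1 < r := by linarith
  have hv : p k + x k - xs = (y k - xs) + (a (k + 1) - 1) • (y k - x k) := by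
    rw [nesterov_momentum_identity hr1 ha hy hp0 hp k]; module
  have hv' : p (k + 1) + x (k + 1) - xs = (y k - xs) + (a (k + 1) - 1) • (y k - x k)
      - (α * a (k + 1)) • gradient f (y k) := by
    rw [hp (k + 1) k.succ_pos, Nat.add_sub_cancel, hx k]; module
  rw [hv, hv']
  exact norm_add_smul_sub_smul_sq_le hα.le (one_le_nesterov_coeff_succ hr1 ha k)
    (nesterov_coeff_succ_mul_sub_one_le_sq hr ha0 ha k) (sub_nonneg.2 (hmin _))
    (by linarith [hstep xs]) (by linarith [hstep (x k)])

/-- One-step estimate for Nesterov's method in the general convex case: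
`‖p_{k+1} + x_{k+1} - x*‖² ≤ ‖p_k + x_k - x*‖² - 2α a_{k+1}² (f(x_{k+1}) - f*)
  + 2α a_k² (f(x_k) - f*)`. -/
theorem nesterov_one_step_estimate {n : ℕ} (f : EuclideanSpace ℝ (Fin n) → ℝ)
    (L : ℝ) (hL : 0 < L)
    (hsmooth : ContDiff ℝ 1 f)
    (hlip : ∀ a b, ‖gradient f a - gradient f b‖ ≤ L * ‖a - b‖)
    (hconv : ∀ a b, f a + ⟪gradient f a, b - a⟫ ≤ f b)
    (xs : EuclideanSpace ℝ (Fin n)) (hmin : ∀ z, f xs ≤ f z)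
    (α r : ℝ) (hα : 0 < α) (hαL : α ≤ 1 / L) (hr : 3 ≤ r)
    (a : ℕ → ℝ) (ha0 : a 0 = 0)
    (ha : ∀ k : ℕ, 1 ≤ k → a k = ((k : ℝ) + r - 2) / (r - 1))
    (x y : ℕ → EuclideanSpace ℝ (Fin n))
    (hy : ∀ k : ℕ, y k = x k + (((k : ℝ) - 1) / ((k : ℝ) + r - 1)) • (x k - x (k - 1)))
    (hx : ∀ k : ℕ, x (k + 1) = y k - α • gradient f (y k))
    (p : ℕ → EuclideanSpace ℝ (Fin n)) (hp0 : p 0 = 0)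
    (hp : ∀ k : ℕ, 1 ≤ k → p k = (a k - 1) • (x k - x (k - 1))) :
    ∀ k : ℕ, ‖p (k + 1) + x (k + 1) - xs‖ ^ 2 ≤
      ‖p k + x k - xs‖ ^ 2 - 2 * α * (a (k + 1)) ^ 2 * (f (x (k + 1)) - f xs)
        + 2 * α * (a k) ^ 2 * (f (x k) - f xs) :=
  nesterov_one_step_estimate_general f L hsmooth hlip hconv xs hmin α r hα hαL hr a ha0 ha x y hy hx
    p hp0 hp
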